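/- Let f₀: S² → ℂP^m be a holomorphic curve with Frenet frame f₀, f₁, f₂, ... satisfying ⟨f₀, conj(f₀)⟩ = 0 and ⟨f₂, conj(f₀)⟩ = 0 (bilinear pairing). Then ⟨f₃, conj(f₀)⟩ = 0 as well. -/

import Mathlib

/-!
Differentiating a vanishing bilinear pairing by the Leibniz rule, and using
`∂fᵢ = fᵢ₊₁ + cᵢ fᵢ`, gives in turn `⟨f₁, f₀⟩ = 0` (from `⟨f₀, f₀⟩ = 0`),
`⟨f₁, f₁⟩ = 0` (from `⟨f₁, f₀⟩ = 0` and `⟨f₂, f₀⟩ = 0`), `⟨f₂, f₁⟩ = 0` (from `⟨f₁, f₁⟩ = 0`),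
and finally `⟨f₃, f₀⟩ = ⟨∂f₂, f₀⟩ = -⟨f₂, f₁⟩ = 0`.
-/

open scoped ContDiff ComplexConjugate

/-- Wirtinger derivative `∂/∂z`. -/
noncomputable def wirt (f : ℂ → ℂ) (z : ℂ) : ℂ :=
  (1 / 2) * (fderiv ℝ f z 1 - Complex.I * fderiv ℝ f z Complex.I)

theorem wirt_const (c z : ℂ) : wirt (fun _ => c) z = 0 := by
  simp [wirt]

theorem wirt_mul {f g : ℂ → ℂ} {z : ℂ} (hf : DifferentiableAt ℝ f z)
    (hg : DifferentiableAt ℝ g z) :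
    wirt (fun w => f w * g w) z = wirt f z * g z + f z * wirt g z := by
  simp only [wirt, fderiv_fun_mul hf hg, add_apply, smul_apply, smul_eq_mul]
  ring

theorem wirt_sum {ι : Type*} (s : Finset ι) {f : ι → ℂ → ℂ} {z : ℂ}
    (h : ∀ i ∈ s, DifferentiableAt ℝ (f i) z) :
    wirt (fun w => ∑ i ∈ s, f i w) z = ∑ i ∈ s, wirt (f i) z := by
  simp only [wirt, fderiv_fun_sum h, sum_apply, Finset.mul_sum, ← Finset.sum_sub_distrib]

theorem ContDiff.wirt {m n : WithTop ℕ∞} {g : ℂ → ℂ} (hg : ContDiff ℝ n g) (hmn : m + 1 ≤ n) :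
    ContDiff ℝ m (wirt g) := by
  have hd := hg.fderiv_right hmn
  exact contDiff_const.mul ((hd.clm_apply contDiff_const).sub
    (contDiff_const.mul (hd.clm_apply contDiff_const)))

section Frenet

variable {ι : Type*} [Fintype ι]

noncomputable def wirtVec (f : ℂ → ι → ℂ) (z : ℂ) : ι → ℂ :=
  fun i => wirt (fun w => f w i) z

theorem wirt_dotProduct {f g : ℂ → ι → ℂ} {z : ℂ}
    (hf : ∀ i, DifferentiableAt ℝ (fun w => f w i) z)
    (hg : ∀ i, DifferentiableAt ℝ (fun w => g w i) z) :
    wirt (fun w => f w ⬝ᵥ g w) z = wirtVec f z ⬝ᵥ g z + f z ⬝ᵥ wirtVec g z := by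
  simp only [dotProduct]
  rw [wirt_sum (f := fun i w => f w i * g w i) _ fun i _ => (hf i).mul (hg i),
    ← Finset.sum_add_distrib]
  exact Finset.sum_congr rfl fun i _ => wirt_mul (hf i) (hg i)

theorem wirtVec_dotProduct_eq_neg_of_dotProduct_eq_zero {f g : ℂ → ι → ℂ} {z : ℂ}
    (hf : ∀ i, DifferentiableAt ℝ (fun w => f w i) z)
    (hg : ∀ i, DifferentiableAt ℝ (fun w => g w i) z) (h : ∀ w, f w ⬝ᵥ g w = 0) :
    wirtVec f z ⬝ᵥ g z = -(f z ⬝ᵥ wirtVec g z) := by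
  have hfg := wirt_dotProduct hf hg
  rw [funext h, wirt_const] at hfg
  linear_combination -hfg

noncomputable def frenetCoeff (f : ℂ → ι → ℂ) (z : ℂ) : ℂ :=
  (∑ j, wirt (fun w => f w j) z * conj (f z j)) / ((∑ j, Complex.normSq (f z j) : ℝ) : ℂ)

noncomputable def frenetNext (f : ℂ → ι → ℂ) (z : ℂ) : ι → ℂ :=
  wirtVec f z - frenetCoeff f z • f z

theorem frenetNext_dotProduct (f : ℂ → ι → ℂ) (z : ℂ) (v : ι → ℂ) :
    frenetNext f z ⬝ᵥ v = wirtVec f z ⬝ᵥ v - frenetCoeff f z * (f z ⬝ᵥ v) := by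
  rw [frenetNext, sub_dotProduct, smul_dotProduct, smul_eq_mul]

theorem frenetNext_dotProduct_self_eq_zero {f : ℂ → ι → ℂ} {z : ℂ}
    (hf : ∀ i, DifferentiableAt ℝ (fun w => f w i) z) (h : ∀ w, f w ⬝ᵥ f w = 0) :
    frenetNext f z ⬝ᵥ f z = 0 := by
  have hff := wirtVec_dotProduct_eq_neg_of_dotProduct_eq_zero hf hf h
  rw [dotProduct_comm (f z)] at hff
  rw [frenetNext_dotProduct]
  linear_combination hff / 2 - frenetCoeff f z * h z

theorem wirtVec_dotProduct_eq_neg_dotProduct_frenetNext {f g : ℂ → ι → ℂ} {z : ℂ}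
    (hg : ∀ i, DifferentiableAt ℝ (fun w => g w i) z)
    (hf : ∀ i, DifferentiableAt ℝ (fun w => f w i) z) (h : ∀ w, g w ⬝ᵥ f w = 0) :
    wirtVec g z ⬝ᵥ f z = -(g z ⬝ᵥ frenetNext f z) := by
  rw [wirtVec_dotProduct_eq_neg_of_dotProduct_eq_zero hg hf h, frenetNext, dotProduct_sub,
    dotProduct_smul, h z, smul_zero, sub_zero]

theorem ofReal_sum_normSq_ne_zero {v : ι → ℂ} (hv : v ≠ 0) :
    ((∑ j, Complex.normSq (v j) : ℝ) : ℂ) ≠ 0 := by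
  obtain ⟨j, hj⟩ := Function.ne_iff.mp hv
  exact Complex.ofReal_ne_zero.mpr (Finset.sum_pos' (fun j _ => Complex.normSq_nonneg _)
    ⟨j, Finset.mem_univ j, Complex.normSq_pos.mpr hj⟩).ne'

theorem contDiff_frenetNext {m n : WithTop ℕ∞} {f : ℂ → ι → ℂ}
    (hf : ∀ i, ContDiff ℝ n fun z => f z i) (hmn : m + 1 ≤ n) (hnz : ∀ z, f z ≠ 0) (i : ι) :
    ContDiff ℝ m fun z => frenetNext f z i := by
  have hfm : ∀ j, ContDiff ℝ m fun z => f z j := fun j => (hf j).of_le (le_self_add.trans hmn)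
  have hnum : ContDiff ℝ m fun z => ∑ j, wirt (fun w => f w j) z * conj (f z j) :=
    ContDiff.sum fun j _ => ((hf j).wirt hmn).mul (Complex.conjCLE.contDiff.comp (hfm j))
  have hden : ContDiff ℝ m fun z => ((∑ j, Complex.normSq (f z j) : ℝ) : ℂ) :=
    Complex.ofRealCLM.contDiff.comp <| ContDiff.sum fun j _ => by
      simpa only [Complex.normSq_eq_norm_sq] using (hfm j).norm_sq ℝ
  have hcoeff : ContDiff ℝ m (frenetCoeff f) :=
    hnum.mul (hden.inv fun z => ofReal_sum_normSq_ne_zero (hnz z))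
  exact ((hf i).wirt hmn).sub (hcoeff.mul (hfm i))

end Frenet

theorem isotropy_order_two_implies_three_general (m : ℕ)
    (F f1 f2 f3 : ℂ → Fin (m + 1) → ℂ)
    (hhol : ∀ i, Differentiable ℂ fun z => F z i)
    (hnz : ∀ z, F z ≠ 0) (hnz1 : ∀ z, f1 z ≠ 0)
    (hf1 : ∀ z i, f1 z i = wirt (fun w => F w i) z -
      ((∑ j, wirt (fun w => F w j) z * starRingEnd ℂ (F z j)) /
        ((∑ j, Complex.normSq (F z j) : ℝ) : ℂ)) * F z i)
    (hf2 : ∀ z i, f2 z i = wirt (fun w => f1 w i) z -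
      ((∑ j, wirt (fun w => f1 w j) z * starRingEnd ℂ (f1 z j)) /
        ((∑ j, Complex.normSq (f1 z j) : ℝ) : ℂ)) * f1 z i)
    (hf3 : ∀ z i, f3 z i = wirt (fun w => f2 w i) z -
      ((∑ j, wirt (fun w => f2 w j) z * starRingEnd ℂ (f2 z j)) /
        ((∑ j, Complex.normSq (f2 z j) : ℝ) : ℂ)) * f2 z i)
    (h0 : ∀ z, ∑ i, F z i * F z i = 0)
    (h2 : ∀ z, ∑ i, f2 z i * F z i = 0) :
    ∀ z, ∑ i, f3 z i * F z i = 0 := by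
  replace h0 : ∀ z, F z ⬝ᵥ F z = 0 := h0
  replace h2 : ∀ z, f2 z ⬝ᵥ F z = 0 := h2
  have e1 : f1 = frenetNext F := funext fun z => funext (hf1 z)
  have e2 : f2 = frenetNext f1 := funext fun z => funext (hf2 z)
  have e3 : f3 = frenetNext f2 := funext fun z => funext (hf3 z)
  have hF : ∀ i, ContDiff ℝ ∞ fun z => F z i := fun i => (hhol i).contDiff.restrict_scalars ℝ
  have hF1 : ∀ i, ContDiff ℝ ∞ fun z => f1 z i := e1 ▸ contDiff_frenetNext hF le_rfl hnz
  have hF2 : ∀ i, ContDiff ℝ ∞ fun z => f2 z i := e2 ▸ contDiff_frenetNext hF1 le_rfl hnz1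
  have diff : ∀ {g : ℂ → Fin (m + 1) → ℂ}, (∀ i, ContDiff ℝ ∞ fun z => g z i) →
      ∀ z i, DifferentiableAt ℝ (fun w => g w i) z :=
    fun hg z i => ((hg i).differentiable (by simp)).differentiableAt
  have h01 : ∀ z, f1 z ⬝ᵥ F z = 0 := by
    rw [e1]; exact fun z => frenetNext_dotProduct_self_eq_zero (diff hF z) h0
  have h11 : ∀ z, f1 z ⬝ᵥ f1 z = 0 := fun z => by
    have h := wirtVec_dotProduct_eq_neg_dotProduct_frenetNext (diff hF1 z) (diff hF z) h01
    have h2z := h2 z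
    rw [e2, frenetNext_dotProduct, h, ← e1, h01 z] at h2z
    linear_combination -h2z
  have h21 : ∀ z, f2 z ⬝ᵥ f1 z = 0 := by
    rw [e2]; exact fun z => frenetNext_dotProduct_self_eq_zero (diff hF1 z) h11
  intro z
  change f3 z ⬝ᵥ F z = 0
  rw [e3, frenetNext_dotProduct, wirtVec_dotProduct_eq_neg_dotProduct_frenetNext (diff hF2 z)
    (diff hF z) h2, ← e1, h21 z, h2 z]
  ring

/-- Let `f₀ : S² → ℂPᵐ` be a holomorphic curve (nowhere-zero holomorphic
lift `F`) with Frenet frame `f₀, f₁, f₂, f₃` (each `f_{i+1} = ∂f_i - (⟨∂f_i,f_i⟩_H/|f_i|²) f_i`).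
If the bilinear pairings `⟨f₀, conj f₀⟩` and `⟨f₂, conj f₀⟩` vanish identically, then so does
`⟨f₃, conj f₀⟩`. -/
theorem isotropy_order_two_implies_three (m : ℕ) (hm : 1 ≤ m)
    (F f1 f2 f3 : ℂ → Fin (m + 1) → ℂ)
    (hhol : ∀ i, Differentiable ℂ fun z => F z i)
    (hnz : ∀ z, F z ≠ 0) (hnz1 : ∀ z, f1 z ≠ 0) (hnz2 : ∀ z, f2 z ≠ 0)
    (hfull : ∀ v : Fin (m + 1) → ℂ,
      (∀ z, ∑ i, F z i * starRingEnd ℂ (v i) = 0) → v = 0)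
    (hf1 : ∀ z i, f1 z i = wirt (fun w => F w i) z -
      ((∑ j, wirt (fun w => F w j) z * starRingEnd ℂ (F z j)) /
        ((∑ j, Complex.normSq (F z j) : ℝ) : ℂ)) * F z i)
    (hf2 : ∀ z i, f2 z i = wirt (fun w => f1 w i) z -
      ((∑ j, wirt (fun w => f1 w j) z * starRingEnd ℂ (f1 z j)) /
        ((∑ j, Complex.normSq (f1 z j) : ℝ) : ℂ)) * f1 z i)
    (hf3 : ∀ z i, f3 z i = wirt (fun w => f2 w i) z -
      ((∑ j, wirt (fun w => f2 w j) z * starRingEnd ℂ (f2 z j)) /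
        ((∑ j, Complex.normSq (f2 z j) : ℝ) : ℂ)) * f2 z i)
    (h0 : ∀ z, ∑ i, F z i * F z i = 0)
    (h2 : ∀ z, ∑ i, f2 z i * F z i = 0) :
    ∀ z, ∑ i, f3 z i * F z i = 0 :=
  isotropy_order_two_implies_three_general m F f1 f2 f3 hhol hnz hnz1 hf1 hf2 hf3 h0 h2
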